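/- arXiv:2411.01420 — 6 statements merged into one kernel-verified Lean document; each statement's English description precedes it below -/
import Mathlib

section
/- The function x ↦ arcsin(√x) is Lipschitz with constant 2/√3 on the interval [1/4, 3/4]; that is, for all a, b ∈ [1/4, 3/4], |arcsin(√a) − arcsin(√b)| ≤ (2/√3)·|a − b|. -/
theorem arcsin_sqrt_lipschitz_on_Icc :
    ∀ a ∈ Set.Icc (1/4 : ℝ) (3/4), ∀ b ∈ Set.Icc (1/4 : ℝ) (3/4),
      |Real.arcsin (Real.sqrt a) - Real.arcsin (Real.sqrt b)| ≤ (2 / Real.sqrt 3) * |a - b| := by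
  intro a ha b hb
  set s := Set.Icc (1/4 : ℝ) (3/4)
  set f' : ℝ → ℝ := fun x => 1 / Real.sqrt (1 - Real.sqrt x ^ 2) * (1 / (2 * Real.sqrt x))
  have hderiv : ∀ x ∈ s, HasDerivWithinAt (fun y => Real.arcsin (Real.sqrt y)) (f' x) s x := by
    intro x hx
    obtain ⟨hx1, hx2⟩ := hx
    have hx0 : (0:ℝ) < x := by linarith
    have hs1 : Real.sqrt x ≠ -1 := by
      have : (0:ℝ) ≤ Real.sqrt x := Real.sqrt_nonneg x
      linarith [this]
    have hs2 : Real.sqrt x ≠ 1 := by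
      have : Real.sqrt x < 1 := by
        rw [show (1:ℝ) = Real.sqrt 1 by simp]
        exact Real.sqrt_lt_sqrt (by linarith) (by linarith)
      linarith
    have h1 := Real.hasDerivAt_arcsin hs1 hs2
    have h2 := Real.hasDerivAt_sqrt (ne_of_gt hx0)
    exact (h1.comp x h2).hasDerivWithinAt
  have hbound : ∀ x ∈ s, ‖f' x‖ ≤ 2 / Real.sqrt 3 := by
    intro x hx
    obtain ⟨hx1, hx2⟩ := hx
    have hx0 : (0:ℝ) < x := by linarith
    have hsq : Real.sqrt x ^ 2 = x := Real.sq_sqrt hx0.le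
    have h3pos : (0:ℝ) < Real.sqrt 3 := Real.sqrt_pos.mpr (by norm_num)
    have hxpos : (0:ℝ) < Real.sqrt x := Real.sqrt_pos.mpr hx0
    have h1x : (0:ℝ) < Real.sqrt (1 - x) := Real.sqrt_pos.mpr (by linarith)
    simp only [f']
    rw [hsq]
    have hfpos : 0 < 1 / Real.sqrt (1 - x) * (1 / (2 * Real.sqrt x)) := by positivity
    rw [Real.norm_eq_abs, abs_of_pos hfpos]
    rw [div_mul_div_comm, one_mul]
    rw [div_le_div_iff₀ (by positivity) h3pos]
    -- 1 * √3 ≤ 2 * (√(1-x) * (2 * √x))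
    have key : Real.sqrt 3 ≤ 4 * (Real.sqrt (1-x) * Real.sqrt x) := by
      rw [← Real.sqrt_mul (by linarith) x]
      have h316 : (3/16 : ℝ) ≤ (1-x)*x := by nlinarith
      have : Real.sqrt (3/16) ≤ Real.sqrt ((1-x)*x) := Real.sqrt_le_sqrt h316
      have h16 : Real.sqrt (3/16) = Real.sqrt 3 / 4 := by
        rw [show (3/16:ℝ) = 3 / 4^2 by norm_num, Real.sqrt_div' , Real.sqrt_sq] <;> norm_num
      linarith [this, h16 ▸ this]
    nlinarith [key]
  have := (convex_Icc (1/4:ℝ) (3/4)).norm_image_sub_le_of_norm_hasDerivWithin_le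
    hderiv hbound hb ha
  simpa [Real.norm_eq_abs, abs_sub_comm] using this
end

section
/- Let A and B be n×n complex matrices that are Hermitian, and suppose ‖A‖ ≤ 1, where ‖·‖ denotes the ℓ²→ℓ² operator norm. Then ‖exp(iA)·B·exp(−iA) − B − i(AB − BA)‖ ≤ ‖A(AB−BA) − (AB−BA)A‖ · (e² − 3)/4. -/
open scoped Matrix.Norms.L2Operator

/-!
Campbell's identity `exp X * Y * exp (-X) = exp (ad X) Y` holds because left and right
multiplication by `X` commute, so `exp (ad X)` is the product of the multiplication operators
`exp (L_X)` and `exp (-R_X)`. With `X = i A` the left-hand side is therefore the tail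
`∑_{k ≥ 2} (ad X)^k B / k!` of an exponential series. As `‖ad X‖ ≤ 2 ‖X‖ ≤ 2`, its `k`-th
term is at most `2^(k-2) / k! · ‖(ad X)^2 B‖`, and `∑_{k ≥ 2} 2^(k-2) / k! = (e² - 3) / 4`;
finally `(ad (i A))^2 B = -[A, [A, B]]`.
-/

open NormedSpace
open scoped Nat

theorem Real.hasSum_pow_div_factorial_add_two {c : ℝ} (hc : c ≠ 0) :
    HasSum (fun n : ℕ => c ^ n / (n + 2)!) ((Real.exp c - 1 - c) / c ^ 2) := by
  have hexp : HasSum (fun n : ℕ => c ^ n / n !) (Real.exp c) := by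
    simpa [Real.exp_eq_exp_ℝ] using expSeries_div_hasSum_exp c
  have htail := ((hasSum_nat_add_iff' 2).mpr hexp).div_const (c ^ 2)
  have hterms : (fun n : ℕ => c ^ (n + 2) / (n + 2)! / c ^ 2) = fun n => c ^ n / (n + 2)! := by
    ext n
    field_simp
    ring
  have hhead : ∑ n ∈ Finset.range 2, c ^ n / n ! = 1 + c := by
    norm_num [Finset.sum_range_succ]
  rwa [hterms, hhead, ← sub_sub] at htail

namespace ContinuousLinearMap

section Exp

variable {𝕜 E : Type*} [RCLike 𝕜] [NormedAddCommGroup E] [NormedSpace 𝕜 E]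

theorem norm_pow_apply_le (T : E →L[𝕜] E) {c : ℝ} (hT : ‖T‖ ≤ c) (n : ℕ) (v : E) :
    ‖(T ^ n) v‖ ≤ c ^ n * ‖v‖ := by
  induction n with
  | zero => simp
  | succ n ih =>
    calc ‖(T ^ (n + 1)) v‖ = ‖T ((T ^ n) v)‖ := by rw [pow_succ', mul_apply_eq_comp]
      _ ≤ c * ‖(T ^ n) v‖ := (le_opNorm T _).trans (by gcongr)
      _ ≤ c * (c ^ n * ‖v‖) := by
        gcongr
        exact (norm_nonneg T).trans hT
      _ = c ^ (n + 1) * ‖v‖ := by ring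

variable [CompleteSpace E]

theorem hasSum_exp_apply (T : E →L[𝕜] E) (v : E) :
    HasSum (fun n => (n !⁻¹ : 𝕜) • (T ^ n) v) (exp T v) := by
  simpa using (exp_series_hasSum_exp' (𝕂 := 𝕜) T).mapL (apply 𝕜 E v)

theorem norm_exp_apply_sub_sub_le (T : E →L[𝕜] E) (v : E) {c : ℝ} (hc : 0 < c)
    (hT : ‖T‖ ≤ c) :
    ‖exp T v - v - T v‖ ≤ ‖(T ^ 2) v‖ * ((Real.exp c - 1 - c) / c ^ 2) := by
  have htail : HasSum (fun n : ℕ => ((n + 2)! ⁻¹ : 𝕜) • (T ^ n) ((T ^ 2) v))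
      (exp T v - v - T v) := by
    convert (hasSum_nat_add_iff' 2).mpr (hasSum_exp_apply T v) using 1
    · ext n
      rw [← mul_apply_eq_comp, ← pow_add]
    · simp [Finset.sum_range_succ, sub_sub]
  have hterm (n : ℕ) : ‖((n + 2)! ⁻¹ : 𝕜) • (T ^ n) ((T ^ 2) v)‖
      ≤ ‖(T ^ 2) v‖ * (c ^ n / (n + 2)!) := by
    rw [norm_smul, norm_inv, RCLike.norm_natCast]
    calc ((n + 2)! : ℝ)⁻¹ * ‖(T ^ n) ((T ^ 2) v)‖
        ≤ ((n + 2)! : ℝ)⁻¹ * (c ^ n * ‖(T ^ 2) v‖) := by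
          gcongr
          exact norm_pow_apply_le T hT n _
      _ = ‖(T ^ 2) v‖ * (c ^ n / (n + 2)!) := by ring
  rw [← htail.tsum_eq]
  exact tsum_of_norm_bounded
    ((Real.hasSum_pow_div_factorial_add_two hc.ne').mul_left _) hterm

end Exp

section Ad

variable (𝕜 𝔸 : Type*) [RCLike 𝕜] [NormedRing 𝔸] [NormedAlgebra 𝕜 𝔸]

noncomputable def ad : 𝔸 →L[𝕜] 𝔸 →L[𝕜] 𝔸 := mul 𝕜 𝔸 - (mul 𝕜 𝔸).flip

variable {𝕜 𝔸}

@[simp]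
theorem ad_apply (X Y : 𝔸) : ad 𝕜 𝔸 X Y = X * Y - Y * X := rfl

theorem norm_ad_apply_le (X : 𝔸) : ‖ad 𝕜 𝔸 X‖ ≤ 2 * ‖X‖ :=
  opNorm_le_bound _ (by positivity) fun Y =>
    calc ‖X * Y - Y * X‖ ≤ ‖X‖ * ‖Y‖ + ‖Y‖ * ‖X‖ :=
          (norm_sub_le _ _).trans (add_le_add (norm_mul_le _ _) (norm_mul_le _ _))
      _ = 2 * ‖X‖ * ‖Y‖ := by ring

theorem mul_pow_apply (X : 𝔸) (n : ℕ) (Y : 𝔸) : (mul 𝕜 𝔸 X ^ n) Y = X ^ n * Y := by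
  induction n with
  | zero => simp
  | succ n ih => rw [pow_succ', mul_apply_eq_comp, ih, mul_apply', pow_succ', mul_assoc]

theorem flip_mul_pow_apply (X : 𝔸) (n : ℕ) (Y : 𝔸) :
    ((mul 𝕜 𝔸).flip X ^ n) Y = Y * X ^ n := by
  induction n with
  | zero => simp
  | succ n ih => rw [pow_succ', mul_apply_eq_comp, ih, flip_apply, mul_apply', pow_succ, mul_assoc]

variable [CompleteSpace 𝔸]

theorem exp_mul_apply (X Y : 𝔸) : exp (mul 𝕜 𝔸 X) Y = exp X * Y :=
  (hasSum_exp_apply _ Y).unique <| by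
    simpa only [mul_pow_apply, smul_mul_assoc] using
      (exp_series_hasSum_exp' (𝕂 := 𝕜) X).mul_right Y

theorem exp_flip_mul_apply (X Y : 𝔸) : exp ((mul 𝕜 𝔸).flip X) Y = Y * exp X :=
  (hasSum_exp_apply _ Y).unique <| by
    simpa only [flip_mul_pow_apply, mul_smul_comm] using
      (exp_series_hasSum_exp' (𝕂 := 𝕜) X).mul_left Y

theorem exp_ad_apply (X Y : 𝔸) : exp (ad 𝕜 𝔸 X) Y = exp X * Y * exp (-X) := by
  -- `exp_add_of_commute` is stated for normed `ℚ`-algebras.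
  let _ := NormedAlgebra.restrictScalars ℚ 𝕜 (𝔸 →L[𝕜] 𝔸)
  have hcomm : Commute (mul 𝕜 𝔸 X) (-(mul 𝕜 𝔸).flip X) := by
    ext Z
    simp [mul_assoc]
  rw [ad, sub_apply, sub_eq_add_neg, exp_add_of_commute hcomm, mul_apply_eq_comp, ← map_neg,
    exp_flip_mul_apply, exp_mul_apply, mul_assoc]

end Ad

end ContinuousLinearMap

open ContinuousLinearMap in
theorem conjugation_perturbation_bound_general {n : ℕ}
    (A B : Matrix (Fin n) (Fin n) ℂ)
    (hAnorm : ‖A‖ ≤ 1) :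
    ‖NormedSpace.exp (Complex.I • A) * B * NormedSpace.exp (-(Complex.I • A))
        - B - Complex.I • (A * B - B * A)‖
      ≤ ‖A * (A * B - B * A) - (A * B - B * A) * A‖ * ((Real.exp 1 ^ 2 - 3) / 4) := by
  set T := ad ℂ (Matrix (Fin n) (Fin n) ℂ) (Complex.I • A)
  have hT : ‖T‖ ≤ 2 := calc
    ‖T‖ ≤ 2 * ‖Complex.I • A‖ := norm_ad_apply_le _
    _ ≤ 2 := by rw [norm_smul, Complex.norm_I, one_mul]; linarith
  have hT1 : T B = Complex.I • (A * B - B * A) := by simp [T]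
  have hT2 : (T ^ 2) B = -(A * (A * B - B * A) - (A * B - B * A) * A) := by
    simp [T, smul_smul]
  have h := norm_exp_apply_sub_sub_le T B two_pos hT
  have hconst : (Real.exp 2 - 1 - 2) / 2 ^ 2 = (Real.exp 1 ^ 2 - 3) / 4 := by
    rw [Real.exp_one_pow, Nat.cast_ofNat]
    norm_num [sub_sub]
  rwa [exp_ad_apply, hT1, hT2, norm_neg, hconst] at h

theorem conjugation_perturbation_bound {n : ℕ}
    (A B : Matrix (Fin n) (Fin n) ℂ)
    (hA : A.IsHermitian) (hB : B.IsHermitian) (hAnorm : ‖A‖ ≤ 1) :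
    ‖NormedSpace.exp (Complex.I • A) * B * NormedSpace.exp (-(Complex.I • A))
        - B - Complex.I • (A * B - B * A)‖
      ≤ ‖A * (A * B - B * A) - (A * B - B * A) * A‖ * ((Real.exp 1 ^ 2 - 3) / 4) :=
  conjugation_perturbation_bound_general A B hAnorm
end

section
/- Let A and B be n×n complex Hermitian matrices with ‖A‖ ≤ 1 (ℓ²→ℓ² operator norm), let t be a real number with |t| ≤ 1, and let ρ be an n×n positive semidefinite complex matrix with trace 1. Then |Tr(exp(itA)·B·exp(−itA)·ρ) − Tr(B·ρ) − t·Tr(i(AB − BA)·ρ)| ≤ t² · ‖AB − BA‖ · (e² − 3)/2. -/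
open scoped Matrix.Norms.L2Operator ComplexOrder

/-!
For skew-adjoint `x` the map `v ↦ exp (v x) b exp (-v x)` is conjugation by unitaries, with
derivative `exp (v x) ⁅x, b⁆ exp (-v x)`. Two applications of the mean value inequality on
`[0, 1]` bound the second-order remainder `exp x b exp (-x) - b - ⁅x, b⁆` by `‖⁅x, ⁅x, b⁆⁆‖`,
hence by `2 t² ‖A‖ ‖⁅A, B⁆‖` for `x = i t A`. Pairing with a density matrix costs nothing
in norm, and `2 ≤ (e² - 3) / 2`.
-/

open NormedSpace

theorem norm_lie_le {𝔸 : Type*} [NonUnitalSeminormedRing 𝔸] (x y : 𝔸) :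
    ‖⁅x, y⁆‖ ≤ 2 * ‖x‖ * ‖y‖ :=
  calc ‖⁅x, y⁆‖ ≤ ‖x * y‖ + ‖y * x‖ := Ring.lie_def x y ▸ norm_sub_le _ _
    _ ≤ ‖x‖ * ‖y‖ + ‖y‖ * ‖x‖ := add_le_add (norm_mul_le x y) (norm_mul_le y x)
    _ = 2 * ‖x‖ * ‖y‖ := by ring

theorem Ring.smul_lie {R 𝔸 : Type*} [CommSemiring R] [Ring 𝔸] [Algebra R 𝔸] (r : R) (x y : 𝔸) :
    ⁅r • x, y⁆ = r • ⁅x, y⁆ := by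
  rw [Ring.lie_def, Ring.lie_def, smul_mul_assoc, mul_smul_comm, smul_sub]

section ExpConjugation

variable {𝔸 : Type*} [NormedRing 𝔸] [NormedAlgebra ℝ 𝔸] [CompleteSpace 𝔸]

theorem hasDerivAt_exp_smul_mul_mul_exp_neg_smul (x b : 𝔸) (u : ℝ) :
    HasDerivAt (fun v : ℝ => exp (v • x) * b * exp (-(v • x)))
      (exp (u • x) * ⁅x, b⁆ * exp (-(u • x))) u := by
  have hexp := hasDerivAt_exp_smul_const (𝕂 := ℝ) x u
  have hexp_neg : HasDerivAt (fun v : ℝ => exp (-(v • x))) (-(x * exp (-(u • x)))) u := by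
    simpa only [smul_neg, neg_mul] using hasDerivAt_exp_smul_const' (𝕂 := ℝ) (-x) u
  refine ((hexp.mul_const b).mul hexp_neg).congr_deriv ?_
  rw [Ring.lie_def]
  noncomm_ring

variable [StarRing 𝔸] [CStarRing 𝔸]

theorem norm_exp_mul_mul_exp_neg {x : 𝔸} (hx : x ∈ skewAdjoint 𝔸) (c : 𝔸) :
    ‖exp x * c * exp (-x)‖ = ‖c‖ := by
  let +nondep : NormedAlgebra ℚ 𝔸 := .restrictScalars ℚ ℝ 𝔸
  rw [CStarRing.norm_mul_mem_unitary _ (exp_mem_unitary_of_mem_skewAdjoint (neg_mem hx)),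
    CStarRing.norm_mem_unitary_mul _ (exp_mem_unitary_of_mem_skewAdjoint hx)]

theorem norm_exp_mul_mul_exp_neg_sub_le [StarModule ℝ 𝔸] {x : 𝔸} (hx : x ∈ skewAdjoint 𝔸)
    (c : 𝔸) :
    ‖exp x * c * exp (-x) - c‖ ≤ ‖⁅x, c⁆‖ := by
  have h := norm_image_sub_le_of_norm_deriv_le_segment_01'
    (fun v _ => (hasDerivAt_exp_smul_mul_mul_exp_neg_smul x c v).hasDerivWithinAt)
    (fun v _ => (norm_exp_mul_mul_exp_neg (skewAdjoint.smul_mem v hx) _).le)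
  simpa using h

theorem norm_exp_mul_mul_exp_neg_sub_sub_lie_le [StarModule ℝ 𝔸] {x : 𝔸}
    (hx : x ∈ skewAdjoint 𝔸) (b : 𝔸) :
    ‖exp x * b * exp (-x) - b - ⁅x, b⁆‖ ≤ ‖⁅x, ⁅x, b⁆⁆‖ := by
  have hderiv (v : ℝ) : HasDerivAt (fun v : ℝ => exp (v • x) * b * exp (-(v • x)) - v • ⁅x, b⁆)
      (exp (v • x) * ⁅x, b⁆ * exp (-(v • x)) - ⁅x, b⁆) v := by
    simpa only [one_smul] using (hasDerivAt_exp_smul_mul_mul_exp_neg_smul x b v).fun_sub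
      ((hasDerivAt_id' v).smul_const ⁅x, b⁆)
  have hbound : ∀ v ∈ Set.Ico (0 : ℝ) 1,
      ‖exp (v • x) * ⁅x, b⁆ * exp (-(v • x)) - ⁅x, b⁆‖ ≤ ‖⁅x, ⁅x, b⁆⁆‖ := by
    intro v hv
    calc _ ≤ ‖⁅v • x, ⁅x, b⁆⁆‖ :=
          norm_exp_mul_mul_exp_neg_sub_le (skewAdjoint.smul_mem v hx) _
      _ = |v| * ‖⁅x, ⁅x, b⁆⁆‖ := by rw [Ring.smul_lie, norm_smul, Real.norm_eq_abs]
      _ ≤ ‖⁅x, ⁅x, b⁆⁆‖ := by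
          rw [abs_of_nonneg hv.1]
          exact mul_le_of_le_one_left (norm_nonneg _) hv.2.le
  have h := norm_image_sub_le_of_norm_deriv_le_segment_01'
    (fun v _ => (hderiv v).hasDerivWithinAt) hbound
  simpa [sub_right_comm] using h

end ExpConjugation

namespace Matrix

variable {𝕜 m n : Type*} [RCLike 𝕜] [Fintype m] [Fintype n] [DecidableEq n]

theorem norm_apply_le_l2_opNorm (M : Matrix m n 𝕜) (i : m) (j : n) : ‖M i j‖ ≤ ‖M‖ := by
  set e := EuclideanSpace.single j (1 : 𝕜)
  have h1 : ‖M i j‖ ≤ ‖(EuclideanSpace.equiv m 𝕜).symm (M *ᵥ e)‖ := by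
    simpa [e, PiLp.ofLp_single, mulVec_single_one] using
      PiLp.norm_apply_le ((EuclideanSpace.equiv m 𝕜).symm (M *ᵥ e)) i
  have h2 : ‖(EuclideanSpace.equiv m 𝕜).symm (M *ᵥ e)‖ ≤ ‖M‖ := by
    simpa [e, PiLp.norm_single] using M.l2_opNorm_mulVec e
  exact h1.trans h2

theorem PosSemidef.norm_trace_mul_le {ρ : Matrix n n 𝕜} (hρ : ρ.PosSemidef) (M : Matrix n n 𝕜) :
    ‖(M * ρ).trace‖ ≤ ‖M‖ * ‖ρ.trace‖ := by
  set U : Matrix n n 𝕜 := (hρ.1.eigenvectorUnitary : Matrix n n 𝕜)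
  have hU : U ∈ unitary (Matrix n n 𝕜) := hρ.1.eigenvectorUnitary.2
  set μ := hρ.1.eigenvalues
  have hμ : ∀ k, 0 ≤ μ k := hρ.eigenvalues_nonneg
  have hρ_eq : ρ = U * diagonal (RCLike.ofReal ∘ μ) * star U := hρ.1.spectral_theorem
  have hUMU : ‖star U * M * U‖ = ‖M‖ := by
    rw [CStarRing.norm_mul_mem_unitary _ hU,
      CStarRing.norm_mem_unitary_mul _ (Unitary.star_mem hU)]
  have htrace : (M * ρ).trace = ∑ k, (star U * M * U) k k * μ k := by
    rw [hρ_eq, ← mul_assoc, ← mul_assoc, trace_mul_cycle, ← mul_assoc]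
    simp only [trace, diag_apply, mul_diagonal, Function.comp_apply]
  calc ‖(M * ρ).trace‖ ≤ ∑ k, ‖(star U * M * U) k k‖ * μ k := by
        rw [htrace]
        refine (norm_sum_le _ _).trans (Finset.sum_le_sum fun k _ => ?_)
        rw [norm_mul, RCLike.norm_ofReal, abs_of_nonneg (hμ k)]
    _ ≤ ∑ k, ‖M‖ * μ k := Finset.sum_le_sum fun k _ =>
        mul_le_mul_of_nonneg_right (hUMU ▸ norm_apply_le_l2_opNorm _ k k) (hμ k)
    _ = ‖M‖ * ‖ρ.trace‖ := by
        rw [← Finset.mul_sum, hρ.1.trace_eq_sum_eigenvalues, ← RCLike.ofReal_sum,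
          RCLike.norm_ofReal, abs_of_nonneg (Finset.sum_nonneg fun k _ => hμ k)]

end Matrix

open Matrix in
theorem trace_conjugation_perturbation_bound_general {n : ℕ}
    (A B ρ : Matrix (Fin n) (Fin n) ℂ)
    (hA : A.IsHermitian) (hAnorm : ‖A‖ ≤ 1)
    (t : ℝ)
    (hρ : ρ.PosSemidef) (hρtr : ρ.trace = 1) :
    ‖((NormedSpace.exp ((Complex.I * t) • A) * B *
            NormedSpace.exp (-((Complex.I * t) • A)) * ρ).trace
          - (B * ρ).trace - (t : ℂ) * (Complex.I • (A * B - B * A) * ρ).trace)‖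
      ≤ t ^ 2 * ‖A * B - B * A‖ * ((Real.exp 1 ^ 2 - 3) / 2) := by
  set x := (Complex.I * t) • A
  have hx : x ∈ skewAdjoint (Matrix (Fin n) (Fin n) ℂ) :=
    hA.isSelfAdjoint.smul_mem_skewAdjoint (by simp [skewAdjoint.mem_iff])
  have hxB : ⁅x, B⁆ = (Complex.I * t) • (A * B - B * A) := by
    rw [Ring.smul_lie, Ring.lie_def]
  have htrace : ((exp x * B * exp (-x) * ρ).trace - (B * ρ).trace
      - (t : ℂ) * (Complex.I • (A * B - B * A) * ρ).trace)
      = ((exp x * B * exp (-x) - B - ⁅x, B⁆) * ρ).trace := by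
    rw [hxB, sub_mul, sub_mul, trace_sub, trace_sub, smul_mul_assoc, smul_mul_assoc,
      trace_smul, trace_smul, smul_eq_mul, smul_eq_mul]
    ring
  have hnorm_smul (M : Matrix (Fin n) (Fin n) ℂ) : ‖(Complex.I * t) • M‖ = |t| * ‖M‖ := by
    rw [norm_smul, norm_mul, Complex.norm_I, Complex.norm_real, Real.norm_eq_abs, one_mul]
  have hexp_one : 2 ≤ (Real.exp 1 ^ 2 - 3) / 2 := by nlinarith [Real.exp_one_gt_d9]
  calc _ = ‖((exp x * B * exp (-x) - B - ⁅x, B⁆) * ρ).trace‖ := by rw [htrace]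
    _ ≤ ‖exp x * B * exp (-x) - B - ⁅x, B⁆‖ := by
        simpa [hρtr] using hρ.norm_trace_mul_le (exp x * B * exp (-x) - B - ⁅x, B⁆)
    _ ≤ ‖⁅x, ⁅x, B⁆⁆‖ := norm_exp_mul_mul_exp_neg_sub_sub_lie_le hx B
    _ ≤ 2 * ‖x‖ * ‖⁅x, B⁆‖ := norm_lie_le _ _
    _ = 2 * t ^ 2 * ‖A‖ * ‖A * B - B * A‖ := by
        rw [hxB, hnorm_smul, hnorm_smul, ← sq_abs t]; ring
    _ ≤ t ^ 2 * ‖A * B - B * A‖ * ((Real.exp 1 ^ 2 - 3) / 2) := by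
        have := mul_nonneg (sq_nonneg t) (norm_nonneg (A * B - B * A))
        nlinarith

theorem trace_conjugation_perturbation_bound {n : ℕ}
    (A B ρ : Matrix (Fin n) (Fin n) ℂ)
    (hA : A.IsHermitian) (hB : B.IsHermitian) (hAnorm : ‖A‖ ≤ 1)
    (t : ℝ) (ht : |t| ≤ 1)
    (hρ : ρ.PosSemidef) (hρtr : ρ.trace = 1) :
    ‖((NormedSpace.exp ((Complex.I * t) • A) * B *
            NormedSpace.exp (-((Complex.I * t) • A)) * ρ).trace
          - (B * ρ).trace - (t : ℂ) * (Complex.I • (A * B - B * A) * ρ).trace)‖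
      ≤ t ^ 2 * ‖A * B - B * A‖ * ((Real.exp 1 ^ 2 - 3) / 2) :=
  trace_conjugation_perturbation_bound_general A B ρ hA hAnorm t hρ hρtr
end

section
/- Let N and p be positive integers with p < N. Then ∑_{l=−N}^{N−1} (2·cos(lπ/(2N)))^{4p} = 2N · C(4p, 2p), where C(4p, 2p) is the central binomial coefficient. -/
open scoped Real

open Finset

/-!
With `ω = exp (2πi / 2N)`, a primitive `2N`-th root of unity, the binomial theorem gives
`(2 cos (lπ / 2N)) ^ 4p = ∑ s, C(4p, s) ω ^ ((s - 2p) l)`. As `l` runs over a full period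
modulo `2N`, the inner sums vanish unless `2N ∣ s - 2p`, and `|s - 2p| ≤ 2p < 2N` leaves only
`s = 2p`.
-/

theorem sum_zpow_Ico_eq_zero {K : Type*} [DivisionRing K] {w : K} {n : ℕ} (hwn : w ^ n = 1)
    (hw1 : w ≠ 1) (a : ℤ) : ∑ l ∈ Ico a (a + n), w ^ l = 0 := by
  obtain rfl | hn := eq_or_ne n 0
  · simp
  have hw0 : w ≠ 0 := ne_zero_pow hn (hwn ▸ one_ne_zero)
  rw [Int.Ico_eq_finset_map, sum_map]
  simp only [add_sub_cancel_left, Int.toNat_natCast, Function.Embedding.trans_apply,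
    Nat.castEmbedding_apply, addLeftEmbedding_apply, zpow_add₀ hw0, zpow_natCast, ← mul_sum,
    geom_sum_eq hw1, hwn, sub_self, zero_div, mul_zero]

theorem IsPrimitiveRoot.sum_zpow_mul_Ico {K : Type*} [Field K] {ζ : K} {n : ℕ}
    (hζ : IsPrimitiveRoot ζ n) (k a : ℤ) :
    ∑ l ∈ Ico a (a + n), ζ ^ (k * l) = if (n : ℤ) ∣ k then (n : K) else 0 := by
  simp only [zpow_mul]
  split_ifs with hk
  · simp [(hζ.zpow_eq_one_iff_dvd k).mpr hk]
  · refine sum_zpow_Ico_eq_zero ?_ (mt (hζ.zpow_eq_one_iff_dvd k).mp hk) a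
    rw [← zpow_natCast, ← zpow_mul, mul_comm, zpow_mul, hζ.zpow_eq_one, one_zpow]

theorem Complex.two_cos_pow_two_mul (x : ℂ) (m : ℕ) :
    (2 * cos x) ^ (2 * m)
      = ∑ s ∈ range (2 * m + 1), ((2 * m).choose s : ℂ) * exp (2 * x * I) ^ ((s : ℤ) - m) := by
  set u := exp (x * I)
  have hu : u ≠ 0 := exp_ne_zero _
  have h2cos : 2 * cos x = u + u⁻¹ := by rw [two_cos, neg_mul, exp_neg]
  have hexp : exp (2 * x * I) = u ^ 2 := by rw [← exp_nat_mul]; ring_nf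
  rw [h2cos, add_pow]
  refine sum_congr rfl fun s hs => ?_
  have hs : s ≤ 2 * m := Nat.lt_succ_iff.mp (mem_range.mp hs)
  rw [hexp, inv_pow, mul_comm, ← zpow_natCast u (2 * m - s), ← zpow_neg, ← zpow_natCast u s,
    ← zpow_add₀ hu, ← zpow_natCast u 2, ← zpow_mul]
  congr 2
  push_cast [hs]
  ring

theorem sum_cos_pow_eq_central_binom_general
    (N p : ℕ) (hpN : p < N) :
    ∑ l ∈ Finset.Icc (-(N : ℤ)) ((N : ℤ) - 1),
        (2 * Real.cos ((l : ℝ) * π / (2 * N))) ^ (4 * p)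
      = 2 * N * (Nat.choose (4 * p) (2 * p)) := by
  set ω := Complex.exp (2 * π * Complex.I / ((2 * N : ℕ) : ℂ))
  have hω : IsPrimitiveRoot ω (2 * N) := Complex.isPrimitiveRoot_exp _ (by omega)
  have hterm (l : ℤ) : Complex.exp (2 * ((l : ℂ) * π / (2 * N)) * Complex.I) = ω ^ l := by
    rw [← Complex.exp_int_mul]; push_cast; ring_nf
  have hinterval : Icc (-(N : ℤ)) (N - 1) = Ico (-(N : ℤ)) (-N + (2 * N : ℕ)) := by
    ext; simp only [mem_Icc, mem_Ico]; push_cast; omega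
  have hdvd_iff : ∀ s ∈ range (2 * (2 * p) + 1),
      ((2 * N : ℕ) : ℤ) ∣ (s : ℤ) - (2 * p : ℕ) ↔ s = 2 * p := by
    intro s hs
    rw [mem_range] at hs
    refine ⟨fun h => ?_, fun h => by simp [h]⟩
    have := Int.eq_zero_of_abs_lt_dvd h (by rw [abs_lt]; push_cast; omega)
    omega
  apply Complex.ofReal_injective
  push_cast
  rw [show 4 * p = 2 * (2 * p) by ring]
  simp only [Complex.two_cos_pow_two_mul, hterm]
  simp only [← zpow_mul, mul_comm _ ((_ : ℕ) - _ : ℤ)]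
  rw [sum_comm, hinterval]
  simp only [← mul_sum, hω.sum_zpow_mul_Ico]
  rw [sum_eq_single_of_mem (2 * p) (mem_range.mpr (by omega))
    fun s hs hne => by rw [if_neg (by rwa [hdvd_iff s hs]), mul_zero]]
  simp
  ring

theorem sum_cos_pow_eq_central_binom
    (N p : ℕ) (hN : 0 < N) (hp : 0 < p) (hpN : p < N) :
    ∑ l ∈ Finset.Icc (-(N : ℤ)) ((N : ℤ) - 1),
        (2 * Real.cos ((l : ℝ) * π / (2 * N))) ^ (4 * p)
      = 2 * N * (Nat.choose (4 * p) (2 * p)) :=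
  sum_cos_pow_eq_central_binom_general N p hpN
end

section
/- For every real x with |x| ≤ π/2 and every natural number p, one has (cos x)^{4p} ≤ exp(−p·x²). -/
open scoped Real

namespace Real

/-- Since `sin t ≥ t - t³/6 ≥ (5/6) t` on `[0, 1]` and `(5/6)² ≥ 1/2`. -/
lemma sq_div_two_le_sin_sq {t : ℝ} (ht : |t| ≤ 1) : t ^ 2 / 2 ≤ sin t ^ 2 := by
  wlog ht0 : 0 ≤ t generalizing t
  · simpa [sin_neg] using this (t := -t) (by rwa [abs_neg]) (by linarith)
  have ht1 : t ≤ 1 := (abs_le.mp ht).2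
  have hlow : 5 / 6 * t ≤ sin t := by
    nlinarith [sin_ge_sub_cube ht0, mul_nonneg ht0 (mul_nonneg ht0 (sub_nonneg.mpr ht1))]
  nlinarith [mul_le_mul hlow hlow (by positivity) (by linarith)]

lemma cos_le_one_sub_sq_div_four {x : ℝ} (hx : |x| ≤ 2) : cos x ≤ 1 - x ^ 2 / 4 := by
  have hhalf : |x / 2| ≤ 1 := by rw [abs_div, abs_two]; linarith
  calc cos x = 1 - 2 * sin (x / 2) ^ 2 := by rw [← cos_two_mul_eq_one_sub, mul_div_cancel₀ x two_ne_zero]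
    _ ≤ 1 - 2 * ((x / 2) ^ 2 / 2) := by linarith [sq_div_two_le_sin_sq hhalf]
    _ = 1 - x ^ 2 / 4 := by ring

lemma cos_le_exp_neg_sq_div_four {x : ℝ} (hx : |x| ≤ 2) : cos x ≤ exp (-(x ^ 2 / 4)) :=
  (cos_le_one_sub_sq_div_four hx).trans <| by linarith [add_one_le_exp (-(x ^ 2 / 4))]

end Real

theorem cos_pow_le_exp_neg (x : ℝ) (hx : |x| ≤ π / 2) (p : ℕ) :
    Real.cos x ^ (4 * p) ≤ Real.exp (-(p * x ^ 2)) := by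
  have hcos_nonneg : 0 ≤ Real.cos x :=
    Real.cos_nonneg_of_neg_pi_div_two_le_of_le (by linarith [neg_abs_le x]) (le_of_abs_le hx)
  have hx2 : |x| ≤ 2 := hx.trans (by linarith [Real.pi_lt_four])
  calc Real.cos x ^ (4 * p) ≤ Real.exp (-(x ^ 2 / 4)) ^ (4 * p) :=
        pow_le_pow_left₀ hcos_nonneg (Real.cos_le_exp_neg_sq_div_four hx2) _
    _ = Real.exp (-(p * x ^ 2)) := by
        rw [← Real.exp_nat_mul]
        push_cast
        ring_nf
end

section
/- There exist absolute constants (for instance any p ≥ 2 and π·√p ≤ N suffice) such that for positive integers N and p satisfying p ≥ 2 and π√p ≤ N, ∑_{l=−N}^{N−1} (2·cos(lπ/(2N)))^{4p} · exp(π²·p·l²/(16·N²)) ≤ 4·N·C(4p, 2p). -/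
/-!
On `|x| ≤ π / 2` we have `cos x ≤ exp (-(2/5) x²)`, so the `l`-th summand is at most
`2 ^ (4p) * exp (-c l²)` with `c = (27/20) p (π / (2N))²`. Comparing with the Gaussian integral,
`∑_{l ∈ ℤ} exp (-c l²) ≤ 1 + √(π / c)`, and `4 ^ n ≤ 2 √n * C(2n, n)` trades `2 ^ (4p)` for
`C(4p, 2p)`. What is left, `√(2p) (1 + √(π / c)) ≤ 2N`, follows from `π √p ≤ N`.
-/

open scoped Real

namespace Nat

theorem four_pow_sq_le_four_mul_mul_centralBinom_sq {n : ℕ} (hn : 0 < n) :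
    (4 ^ n) ^ 2 ≤ 4 * n * n.centralBinom ^ 2 := by
  induction n, hn using Nat.le_induction with
  | base => simp [centralBinom]
  | succ n hn ih =>
    refine Nat.le_of_mul_le_mul_right ?_ n.succ_pos
    have hstep : 16 * (n + 1) * (4 * n * n.centralBinom ^ 2) + 16 * n.centralBinom ^ 2
        = 4 * (2 * (2 * n + 1) * n.centralBinom) ^ 2 := by ring
    calc (4 ^ (n + 1)) ^ 2 * (n + 1) = 16 * (n + 1) * (4 ^ n) ^ 2 := by ring
      _ ≤ 16 * (n + 1) * (4 * n * n.centralBinom ^ 2) := by gcongr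
      _ ≤ 4 * (2 * (2 * n + 1) * n.centralBinom) ^ 2 := Nat.le.intro hstep
      _ = 4 * (n + 1) * (n + 1).centralBinom ^ 2 * (n + 1) := by
        rw [← n.succ_mul_centralBinom_succ]; ring

theorem four_pow_le_two_mul_sqrt_mul_centralBinom {n : ℕ} (hn : 0 < n) :
    (4 : ℝ) ^ n ≤ 2 * √n * n.centralBinom := by
  refine (pow_le_pow_iff_left₀ (by positivity) (by positivity) two_ne_zero).1 ?_
  rw [mul_pow, mul_pow, Real.sq_sqrt n.cast_nonneg]
  exact_mod_cast four_pow_sq_le_four_mul_mul_centralBinom_sq hn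

end Nat

namespace Real

theorem cos_le_exp_neg_two_fifths_mul_sq {x : ℝ} (hx : |x| ≤ π / 2) :
    cos x ≤ exp (-(2 / 5) * x ^ 2) := by
  wlog hx₀ : 0 ≤ x generalizing x
  · simpa [cos_abs] using this (x := |x|) (by rwa [abs_abs]) (abs_nonneg x)
  rw [abs_of_nonneg hx₀] at hx
  set t := x / 2 with ht
  have ht₀ : 0 ≤ t := by positivity
  have ht₁ : t ≤ 0.7875 := by linarith [pi_lt_d2]
  -- on `[0, π / 4]`, `sin t ≥ t - t³ / 6 ≥ 0.895 t`, and `2 * 0.895² ≥ 8 / 5`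
  have hsin : 0.895 * t ≤ sin t := by
    have : 0.895 ≤ 1 - t ^ 2 / 6 := by nlinarith
    nlinarith [sin_ge_sub_cube ht₀]
  have hsin_sq : 2 / 5 * x ^ 2 ≤ 2 * sin t ^ 2 := by
    have := mul_le_mul hsin hsin (by positivity) ((by positivity : (0 : ℝ) ≤ 0.895 * t).trans hsin)
    rw [show x = 2 * t by ring]
    nlinarith
  calc cos x = 1 - 2 * sin t ^ 2 := by rw [← cos_two_mul_eq_one_sub, ht]; ring_nf
    _ ≤ exp (-(2 * sin t ^ 2)) := by linarith [add_one_le_exp (-(2 * sin t ^ 2))]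
    _ ≤ exp (-(2 / 5) * x ^ 2) := by gcongr; linarith

theorem antitoneOn_exp_neg_mul_sq {c : ℝ} (hc : 0 ≤ c) :
    AntitoneOn (fun x : ℝ ↦ exp (-c * x ^ 2)) (Set.Ici 0) := by
  intro a ha b _ hab
  have := mul_le_mul_of_nonneg_left (pow_le_pow_left₀ (Set.mem_Ici.1 ha) hab 2) hc
  exact exp_le_exp.2 (by linarith)

theorem summable_nat_exp_neg_mul_sq {c : ℝ} (hc : 0 < c) :
    Summable fun n : ℕ ↦ exp (-c * (n : ℝ) ^ 2) :=
  (antitoneOn_exp_neg_mul_sq hc.le).summable_of_integrableOn_Ioi_zero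
    (integrable_exp_neg_mul_sq hc).integrableOn fun _ _ ↦ (exp_pos _).le

theorem summable_int_exp_neg_mul_sq {c : ℝ} (hc : 0 < c) :
    Summable fun n : ℤ ↦ exp (-c * (n : ℝ) ^ 2) :=
  .of_nat_of_neg (by simpa using summable_nat_exp_neg_mul_sq hc)
    (by simpa using summable_nat_exp_neg_mul_sq hc)

theorem tsum_exp_neg_mul_succ_sq_le {c : ℝ} (hc : 0 < c) :
    ∑' n : ℕ, exp (-c * ((n + 1 : ℕ) : ℝ) ^ 2) ≤ √(π / c) / 2 :=
  ((antitoneOn_exp_neg_mul_sq hc.le).tsum_add_one_le_integral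
    (integrable_exp_neg_mul_sq hc).integrableOn fun _ _ ↦ (exp_pos _).le).trans_eq
    (integral_gaussian_Ioi c)

theorem tsum_int_exp_neg_mul_sq_le {c : ℝ} (hc : 0 < c) :
    ∑' n : ℤ, exp (-c * (n : ℝ) ^ 2) ≤ 1 + √(π / c) := by
  rw [tsum_int_eq_zero_add_two_mul_tsum_pnat (fun n ↦ by simp) (summable_int_exp_neg_mul_sq hc),
    tsum_pnat_eq_tsum_succ (f := fun n : ℕ ↦ exp (-c * ((n : ℤ) : ℝ) ^ 2))]
  have := tsum_exp_neg_mul_succ_sq_le hc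
  push_cast at this ⊢
  rw [zero_pow two_ne_zero, mul_zero, exp_zero, nsmul_eq_mul]
  linarith

theorem sum_exp_neg_mul_sq_le {c : ℝ} (hc : 0 < c) (s : Finset ℤ) :
    ∑ n ∈ s, exp (-c * (n : ℝ) ^ 2) ≤ 1 + √(π / c) :=
  ((summable_int_exp_neg_mul_sq hc).sum_le_tsum s fun _ _ ↦ (exp_pos _).le).trans
    (tsum_int_exp_neg_mul_sq_le hc)

end Real

theorem two_mul_cos_pow_mul_exp_le (p : ℕ) {x : ℝ} (hx : |x| ≤ π / 2) :
    (2 * Real.cos x) ^ (4 * p) * Real.exp (p * x ^ 2 / 4)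
      ≤ 2 ^ (4 * p) * Real.exp (-(27 / 20 * p) * x ^ 2) := by
  have hcos : 0 ≤ Real.cos x :=
    Real.cos_nonneg_of_mem_Icc ⟨by linarith [neg_abs_le x], by linarith [le_abs_self x]⟩
  calc (2 * Real.cos x) ^ (4 * p) * Real.exp (p * x ^ 2 / 4)
      = 2 ^ (4 * p) * (Real.cos x ^ (4 * p) * Real.exp (p * x ^ 2 / 4)) := by ring
    _ ≤ 2 ^ (4 * p) * (Real.exp (-(2 / 5) * x ^ 2) ^ (4 * p) * Real.exp (p * x ^ 2 / 4)) := by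
      gcongr
      exact Real.cos_le_exp_neg_two_fifths_mul_sq hx
    _ = 2 ^ (4 * p) * Real.exp (-(27 / 20 * p) * x ^ 2) := by
      rw [← Real.exp_nat_mul, ← Real.exp_add]
      push_cast
      ring_nf

theorem two_mul_cos_pow_mul_exp_le_of_abs_le {N : ℕ} (hN : 0 < N) (p : ℕ) {l : ℤ}
    (hl : |(l : ℝ)| ≤ N) :
    (2 * Real.cos ((l : ℝ) * π / (2 * N))) ^ (4 * p) *
        Real.exp (π ^ 2 * p * (l : ℝ) ^ 2 / (16 * (N : ℝ) ^ 2))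
      ≤ 2 ^ (4 * p) * Real.exp (-(27 / 20 * p * (π / (2 * N)) ^ 2) * (l : ℝ) ^ 2) := by
  have hx : |(l : ℝ) * π / (2 * N)| ≤ π / 2 := by
    rw [abs_div, abs_mul, abs_of_pos Real.pi_pos, abs_of_pos (by positivity : (0 : ℝ) < 2 * N),
      div_le_iff₀ (by positivity)]
    nlinarith [Real.pi_pos]
  convert two_mul_cos_pow_mul_exp_le p hx using 3 <;> ring

theorem two_pow_four_mul_le_two_mul_sqrt_mul_choose {p : ℕ} (hp : 0 < p) :
    (2 : ℝ) ^ (4 * p) ≤ 2 * √(2 * p) * Nat.choose (4 * p) (2 * p) := by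
  have := Nat.four_pow_le_two_mul_sqrt_mul_centralBinom (n := 2 * p) (by omega)
  rw [Nat.centralBinom, show 2 * (2 * p) = 4 * p by ring] at this
  rw [show (2 : ℝ) ^ (4 * p) = 4 ^ (2 * p) by rw [pow_mul, pow_mul]; norm_num]
  exact_mod_cast this

theorem sqrt_two_mul_mul_one_add_sqrt_le {N p : ℝ} (hp : 0 < p) (hpN : π * √p ≤ N) :
    √(2 * p) * (1 + √(π / (27 / 20 * p * (π / (2 * N)) ^ 2))) ≤ 2 * N := by
  have hN : 0 < N := (mul_pos Real.pi_pos (Real.sqrt_pos.2 hp)).trans_le hpN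
  have hπp : π ^ 2 * p ≤ N ^ 2 := by
    have := pow_le_pow_left₀ (by positivity) hpN 2
    rwa [mul_pow, Real.sq_sqrt hp.le] at this
  have hsqrt₁ : √(2 * p) ≤ 5 / 8 * N := by
    have : 9 ≤ π ^ 2 := by nlinarith [Real.pi_gt_three]
    exact Real.sqrt_le_iff.2 ⟨by positivity, by nlinarith⟩
  -- the product is `N √(160 / (27 π))`
  have hsqrt₂ : √(2 * p) * √(π / (27 / 20 * p * (π / (2 * N)) ^ 2)) ≤ 11 / 8 * N := by
    rw [← Real.sqrt_mul (by positivity)]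
    refine Real.sqrt_le_iff.2 ⟨by positivity, ?_⟩
    field_simp
    nlinarith [Real.pi_gt_d2]
  linarith

theorem subgaussian_mgf_sum_bound
    (N p : ℕ) (hp : 2 ≤ p) (hpN : π * Real.sqrt p ≤ N) :
    ∑ l ∈ Finset.Icc (-(N : ℤ)) ((N : ℤ) - 1),
        (2 * Real.cos ((l : ℝ) * π / (2 * N))) ^ (4 * p) *
          Real.exp (π ^ 2 * p * (l : ℝ) ^ 2 / (16 * (N : ℝ) ^ 2))
      ≤ 4 * N * (Nat.choose (4 * p) (2 * p)) := by
  have hp₀ : (0 : ℝ) < p := by exact_mod_cast (by omega : 0 < p)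
  have hN : 0 < N := by
    exact_mod_cast (mul_pos Real.pi_pos (Real.sqrt_pos.2 hp₀)).trans_le hpN
  set c : ℝ := 27 / 20 * p * (π / (2 * N)) ^ 2
  have hc : 0 < c := by positivity
  calc _ ≤ ∑ l ∈ Finset.Icc (-(N : ℤ)) ((N : ℤ) - 1), 2 ^ (4 * p) * Real.exp (-c * (l : ℝ) ^ 2) :=
        Finset.sum_le_sum fun l hl ↦ two_mul_cos_pow_mul_exp_le_of_abs_le hN p <| by
          rw [Finset.mem_Icc] at hl
          exact abs_le.2 ⟨by exact_mod_cast hl.1, by exact_mod_cast (by omega : l ≤ N)⟩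
    _ ≤ 2 ^ (4 * p) * (1 + √(π / c)) := by
        rw [← Finset.mul_sum]
        gcongr
        exact Real.sum_exp_neg_mul_sq_le hc _
    _ ≤ 2 * √(2 * p) * Nat.choose (4 * p) (2 * p) * (1 + √(π / c)) := by
        gcongr
        exact two_pow_four_mul_le_two_mul_sqrt_mul_choose (by omega)
    _ ≤ 4 * N * Nat.choose (4 * p) (2 * p) := by
        nlinarith [sqrt_two_mul_mul_one_add_sqrt_le hp₀ hpN]
end
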